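/- arXiv:1212.6617 — 2 statements merged into one kernel-verified Lean document; each statement's English description precedes it below -/
import Mathlib

section
/- Let C > 0 and U_α = {v ∈ Q̂ : B(α,v) > C}. Setting T = min over α ∈ Δ of 1/(1 − 2C|α|₁), for any x ∈ U_α and y ∈ V_α one has |B(s_α · x, s_α · y)| > T·|B(x,y)|, where T > 1. -/
/-!
Since `B` has `n - 1` positive eigenvalues and `o` is an eigenvector for a nonpositive one, `B` is
positive definite on the Euclidean complement of `o`. Hence for distinct normalized isotropic `x, y`
we get `0 < B(x - y, x - y) = -2 B(x, y)`, and an isotropic `w` with `B(u, w) < 0` for some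
isotropic `u` with `⟨u, o⟩ > 0` also has `⟨w, o⟩ > 0`. Since `B(z, s_α z) = -2 B(α, z)²`, this makes
the normalizing factor `|s_α z|₁ = 1 - 2 B(α, z) |α|₁` positive for every `z ∈ V_α`. As `s_α`
preserves `B`, `|B(s_α·x, s_α·y)| = |B(x, y)| / (|s_α x|₁ |s_α y|₁)`, and the two factors are
bounded below by `T` (strictly) and by `1`.
-/

open Matrix Finset

namespace Matrix

variable {ι : Type*} [Fintype ι]

theorem IsSymm.dotProduct_mulVec_comm {R : Type*} [CommSemiring R] {A : Matrix ι ι R}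
    (hA : A.IsSymm) (u w : ι → R) : u ⬝ᵥ A *ᵥ w = w ⬝ᵥ A *ᵥ u := by
  rw [dotProduct_mulVec, ← mulVec_transpose, hA.eq, dotProduct_comm]

theorem IsSymm.dotProduct_eq_zero_of_mulVec_eq_smul {K : Type*} [Field K] {A : Matrix ι ι K}
    (hA : A.IsSymm) {u w : ι → K} {a b : K} (hu : A *ᵥ u = a • u) (hw : A *ᵥ w = b • w)
    (hab : a ≠ b) : u ⬝ᵥ w = 0 := by
  have h : a * (u ⬝ᵥ w) = b * (u ⬝ᵥ w) :=
    calc a * (u ⬝ᵥ w) = w ⬝ᵥ A *ᵥ u := by rw [hu, dotProduct_smul, dotProduct_comm, smul_eq_mul]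
      _ = u ⬝ᵥ A *ᵥ w := hA.dotProduct_mulVec_comm w u
      _ = b * (u ⬝ᵥ w) := by rw [hw, dotProduct_smul, smul_eq_mul]
  exact (mul_eq_mul_right_iff.mp h).resolve_left hab

namespace IsHermitian

variable [DecidableEq ι] {A : Matrix ι ι ℝ} (hA : A.IsHermitian)

theorem dotProduct_eq_sum_eigenvectorBasis (u w : ι → ℝ) :
    u ⬝ᵥ w = ∑ j, (hA.eigenvectorBasis j ⬝ᵥ u) * (hA.eigenvectorBasis j ⬝ᵥ w) := by
  have := hA.eigenvectorBasis.sum_inner_mul_inner (WithLp.toLp 2 u) (WithLp.toLp 2 w)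
  simp only [EuclideanSpace.inner_eq_star_dotProduct, star_trivial] at this
  rw [dotProduct_comm u w, ← this]
  exact sum_congr rfl fun j _ => by rw [dotProduct_comm w]

theorem exists_dotProduct_eigenvectorBasis_ne_zero {v : ι → ℝ} (hv : v ≠ 0) :
    ∃ j, hA.eigenvectorBasis j ⬝ᵥ v ≠ 0 := by
  by_contra! h
  refine hv (dotProduct_self_eq_zero.mp ?_)
  rw [hA.dotProduct_eq_sum_eigenvectorBasis]
  simp [h]

theorem dotProduct_mulVec_eq_sum (v : ι → ℝ) :
    v ⬝ᵥ A *ᵥ v = ∑ j, hA.eigenvalues j * (hA.eigenvectorBasis j ⬝ᵥ v) ^ 2 := by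
  have hsymm : A.IsSymm := isHermitian_iff_isSymm.mp hA
  rw [hA.dotProduct_eq_sum_eigenvectorBasis]
  refine sum_congr rfl fun j _ => ?_
  rw [hsymm.dotProduct_mulVec_comm, mulVec_eigenvectorBasis, dotProduct_smul, smul_eq_mul,
    dotProduct_comm]
  ring

theorem eigenvalues_pos_of_ne
    (hpos : (univ.filter fun j => 0 < hA.eigenvalues j).card = Fintype.card ι - 1)
    {j k : ι} (hk : hA.eigenvalues k ≤ 0) (hjk : j ≠ k) : 0 < hA.eigenvalues j := by
  by_contra! hj
  have hsub : univ.filter (fun l => 0 < hA.eigenvalues l) ⊆ (univ.erase j).erase k := by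
    intro l hl
    have hl := (mem_filter.mp hl).2
    simp only [mem_erase, mem_univ, and_true]
    exact ⟨by rintro rfl; linarith, by rintro rfl; linarith⟩
  have hcard := card_le_card hsub
  have htwo : 2 ≤ Fintype.card ι := Fintype.one_lt_card_iff_nontrivial.mpr ⟨j, k, hjk⟩
  rw [card_erase_of_mem (mem_erase.mpr ⟨hjk.symm, mem_univ k⟩),
    card_erase_of_mem (mem_univ j), card_univ] at hcard
  omega

theorem dotProduct_mulVec_pos_of_dotProduct_eq_zero
    (hpos : (univ.filter fun j => 0 < hA.eigenvalues j).card = Fintype.card ι - 1)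
    {o : ι → ℝ} {μ : ℝ} (ho : A *ᵥ o = μ • o) (hμ : μ ≤ 0) (ho0 : o ≠ 0)
    {v : ι → ℝ} (hvo : v ⬝ᵥ o = 0) (hv : v ≠ 0) : 0 < v ⬝ᵥ A *ᵥ v := by
  have heigen : ∀ j, hA.eigenvectorBasis j ⬝ᵥ o ≠ 0 → hA.eigenvalues j = μ := fun j hj => by
    by_contra h
    exact hj ((isHermitian_iff_isSymm.mp hA).dotProduct_eq_zero_of_mulVec_eq_smul
      (hA.mulVec_eigenvectorBasis j) ho h)
  obtain ⟨k, hk⟩ := hA.exists_dotProduct_eigenvectorBasis_ne_zero ho0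
  have hpos_ne : ∀ j ≠ k, 0 < hA.eigenvalues j :=
    fun j hj => hA.eigenvalues_pos_of_ne hpos (heigen k hk ▸ hμ) hj
  have hvk : hA.eigenvectorBasis k ⬝ᵥ v = 0 := by
    rw [hA.dotProduct_eq_sum_eigenvectorBasis, sum_eq_single k] at hvo
    · exact (mul_eq_zero.mp hvo).resolve_right hk
    · intro j _ hj
      by_contra h
      have := hpos_ne j hj
      rw [heigen j (right_ne_zero_of_mul h)] at this
      linarith
    · simp
  obtain ⟨j, hj⟩ := hA.exists_dotProduct_eigenvectorBasis_ne_zero hv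
  have hjk : j ≠ k := by rintro rfl; exact hj hvk
  rw [hA.dotProduct_mulVec_eq_sum]
  refine sum_pos' (fun l _ => ?_) ⟨j, mem_univ j, by positivity [hpos_ne j hjk]⟩
  rcases eq_or_ne l k with rfl | hl
  · simp [hvk]
  · exact mul_nonneg (hpos_ne l hl).le (sq_nonneg _)

end IsHermitian

section IsotropicCone

variable {B : Matrix ι ι ℝ} (hB : B.IsSymm) {o : ι → ℝ}
  (hQ : ∀ v, v ⬝ᵥ o = 0 → v ≠ 0 → 0 < v ⬝ᵥ B *ᵥ v)
include hB hQ

theorem dotProduct_mulVec_neg_of_isotropic {x y : ι → ℝ} (hx : x ⬝ᵥ B *ᵥ x = 0)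
    (hy : y ⬝ᵥ B *ᵥ y = 0) (hxo : x ⬝ᵥ o = 1) (hyo : y ⬝ᵥ o = 1) (hxy : x ≠ y) :
    x ⬝ᵥ B *ᵥ y < 0 := by
  have hpos := hQ (x - y) (by rw [sub_dotProduct, hxo, hyo, sub_self]) (sub_ne_zero.mpr hxy)
  have hexpand : (x - y) ⬝ᵥ B *ᵥ (x - y) = -(2 * (x ⬝ᵥ B *ᵥ y)) := by
    rw [sub_dotProduct, mulVec_sub, dotProduct_sub, dotProduct_sub, hx, hy,
      hB.dotProduct_mulVec_comm y x]
    ring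
  linarith

theorem dotProduct_pos_of_isotropic_of_dotProduct_mulVec_neg {u w : ι → ℝ}
    (hu : u ⬝ᵥ B *ᵥ u = 0) (hw : w ⬝ᵥ B *ᵥ w = 0) (huo : 0 < u ⬝ᵥ o)
    (huw : u ⬝ᵥ B *ᵥ w < 0) : 0 < w ⬝ᵥ o := by
  by_contra! hwo
  set v := (u ⬝ᵥ o) • w - (w ⬝ᵥ o) • u with hv
  have hvo : v ⬝ᵥ o = 0 := by
    rw [hv, sub_dotProduct, smul_dotProduct, smul_dotProduct, smul_eq_mul, smul_eq_mul, mul_comm,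
      sub_self]
  have huv : u ⬝ᵥ B *ᵥ v = (u ⬝ᵥ o) * (u ⬝ᵥ B *ᵥ w) := by
    simp only [hv, mulVec_sub, mulVec_smul, dotProduct_sub, dotProduct_smul, hu, smul_eq_mul]
    ring
  have hvv : v ⬝ᵥ B *ᵥ v = -(2 * (u ⬝ᵥ o) * (w ⬝ᵥ o) * (u ⬝ᵥ B *ᵥ w)) := by
    simp only [hv, mulVec_sub, mulVec_smul, dotProduct_sub, dotProduct_smul, sub_dotProduct,
      smul_dotProduct, hu, hw, hB.dotProduct_mulVec_comm w u, smul_eq_mul]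
    ring
  have hv0 : v = 0 := by
    by_contra hv0
    have := hQ v hvo hv0
    nlinarith [mul_nonpos_of_nonneg_of_nonpos huo.le hwo]
  rw [hv0, mulVec_zero, dotProduct_zero] at huv
  nlinarith

end IsotropicCone

variable [DecidableEq ι]

/-- The reflection in the simple root `α = Pi.single i 1`, for which `B(α, v) = (B *ᵥ v) i`. -/
def simpleReflection (B : Matrix ι ι ℝ) (i : ι) (v : ι → ℝ) : ι → ℝ :=
  v - (2 * (B *ᵥ v) i) • Pi.single i 1

variable {B : Matrix ι ι ℝ} {i : ι}

theorem simpleReflection_dotProduct (v o : ι → ℝ) :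
    simpleReflection B i v ⬝ᵥ o = v ⬝ᵥ o - 2 * (B *ᵥ v) i * o i := by
  rw [simpleReflection, sub_dotProduct, smul_dotProduct, single_dotProduct, one_mul, smul_eq_mul]

theorem mulVec_simpleReflection_apply (hii : B i i = 1) (v : ι → ℝ) :
    (B *ᵥ simpleReflection B i v) i = -(B *ᵥ v) i := by
  simp only [simpleReflection, mulVec_sub, mulVec_smul, mulVec_single, MulOpposite.op_one,
    one_smul, Pi.sub_apply, Pi.smul_apply, col_apply, hii, smul_eq_mul, mul_one]
  ring

theorem IsSymm.dotProduct_mulVec_simpleReflection (hB : B.IsSymm) (u w : ι → ℝ) :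
    u ⬝ᵥ B *ᵥ simpleReflection B i w = u ⬝ᵥ B *ᵥ w - 2 * (B *ᵥ w) i * (B *ᵥ u) i := by
  rw [simpleReflection, mulVec_sub, dotProduct_sub, mulVec_smul, dotProduct_smul,
    hB.dotProduct_mulVec_comm u (Pi.single i 1), single_dotProduct, one_mul, smul_eq_mul]

theorem IsSymm.simpleReflection_dotProduct_mulVec_simpleReflection (hB : B.IsSymm)
    (hii : B i i = 1) (u w : ι → ℝ) :
    simpleReflection B i u ⬝ᵥ B *ᵥ simpleReflection B i w = u ⬝ᵥ B *ᵥ w := by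
  rw [hB.dotProduct_mulVec_simpleReflection, mulVec_simpleReflection_apply hii,
    hB.dotProduct_mulVec_comm, hB.dotProduct_mulVec_simpleReflection, hB.dotProduct_mulVec_comm w]
  ring

theorem IsSymm.simpleReflection_dotProduct_pos (hB : B.IsSymm) (hii : B i i = 1) {o : ι → ℝ}
    (hQ : ∀ v, v ⬝ᵥ o = 0 → v ≠ 0 → 0 < v ⬝ᵥ B *ᵥ v) {z : ι → ℝ} (hz : z ⬝ᵥ B *ᵥ z = 0)
    (hzo : 0 < z ⬝ᵥ o) (hzi : 0 ≤ (B *ᵥ z) i) : 0 < simpleReflection B i z ⬝ᵥ o := by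
  rcases hzi.eq_or_lt with hzi | hzi
  · rwa [simpleReflection_dotProduct, ← hzi, mul_zero, zero_mul, sub_zero]
  refine dotProduct_pos_of_isotropic_of_dotProduct_mulVec_neg hB hQ hz ?_ hzo ?_
  · rw [hB.simpleReflection_dotProduct_mulVec_simpleReflection hii, hz]
  · rw [hB.dotProduct_mulVec_simpleReflection, hz]
    nlinarith

end Matrix

theorem one_lt_inv_one_sub_two_mul {C a : ℝ} (hC : 0 < C) (ha : 0 < a) (h : C < 1 / (2 * a)) :
    1 < (1 - 2 * C * a)⁻¹ := by
  have h' : C * (2 * a) < 1 := (lt_div_iff₀ (by positivity)).mp h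
  exact one_lt_inv₀ (by linarith) |>.mpr (by nlinarith)

theorem stmt8_general (n : ℕ) (B : Matrix (Fin n) (Fin n) ℝ) (hB : B.IsHermitian)
    (hdiag : ∀ i, B i i = 1)
    (hpos : (Finset.univ.filter (fun i => 0 < hB.eigenvalues i)).card = n - 1)
    (o : Fin n → ℝ) (μ : ℝ) (hμ : μ < 0) (ho : B.mulVec o = μ • o)
    (honorm : o ⬝ᵥ o = 1) (hopos : ∀ i, 0 < o i)
    (C : ℝ) (hC : 0 < C) (hC2 : ∀ j, C < 1 / (2 * o j))
    (i : Fin n) (x y : Fin n → ℝ)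
    (hxQ : x ⬝ᵥ B.mulVec x = 0) (hx1 : x ⬝ᵥ o = 1)
    (hyQ : y ⬝ᵥ B.mulVec y = 0) (hy1 : y ⬝ᵥ o = 1)
    (hxy : x ≠ y)
    (hx : C < B.mulVec x i) (hy : 0 ≤ B.mulVec y i) :
    let T := Finset.univ.inf' ⟨i, Finset.mem_univ i⟩ (fun j => (1 - 2 * C * o j)⁻¹)
    let sx := x - (2 * B.mulVec x i) • (Pi.single i (1:ℝ) : Fin n → ℝ)
    let sy := y - (2 * B.mulVec y i) • (Pi.single i (1:ℝ) : Fin n → ℝ)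
    let nx := (sx ⬝ᵥ o)⁻¹ • sx
    let ny := (sy ⬝ᵥ o)⁻¹ • sy
    1 < T ∧ T * |x ⬝ᵥ B.mulVec y| < |nx ⬝ᵥ B.mulVec ny| := by
  intro T sx sy nx ny
  have hsx_eq : sx = B.simpleReflection i x := rfl
  have hsy_eq : sy = B.simpleReflection i y := rfl
  have hBs : B.IsSymm := isHermitian_iff_isSymm.mp hB
  have ho0 : o ≠ 0 := by rintro rfl; simp at honorm
  have hQ : ∀ v, v ⬝ᵥ o = 0 → v ≠ 0 → 0 < v ⬝ᵥ B *ᵥ v := fun v =>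
    hB.dotProduct_mulVec_pos_of_dotProduct_eq_zero (by rwa [Fintype.card_fin]) ho hμ.le ho0
  have hsx : 0 < sx ⬝ᵥ o := hBs.simpleReflection_dotProduct_pos (hdiag i) hQ hxQ
    (by rw [hx1]; exact one_pos) (hC.trans hx).le
  have hsy : 0 < sy ⬝ᵥ o := hBs.simpleReflection_dotProduct_pos (hdiag i) hQ hyQ
    (by rw [hy1]; exact one_pos) hy
  have hxBy : x ⬝ᵥ B *ᵥ y < 0 := dotProduct_mulVec_neg_of_isotropic hBs hQ hxQ hyQ hx1 hy1 hxy
  have hT : T < (sx ⬝ᵥ o)⁻¹ := by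
    refine (univ.inf'_le _ (mem_univ i)).trans_lt (inv_strictAnti₀ hsx ?_)
    rw [hsx_eq, simpleReflection_dotProduct, hx1]
    nlinarith [hopos i]
  have hsy1 : 1 ≤ (sy ⬝ᵥ o)⁻¹ := by
    refine one_le_inv₀ hsy |>.mpr ?_
    rw [hsy_eq, simpleReflection_dotProduct, hy1]
    nlinarith [hopos i]
  have hnxny : nx ⬝ᵥ B *ᵥ ny = (sx ⬝ᵥ o)⁻¹ * (sy ⬝ᵥ o)⁻¹ * (x ⬝ᵥ B *ᵥ y) := by
    simp only [nx, ny, smul_dotProduct, mulVec_smul, dotProduct_smul, smul_eq_mul]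
    rw [hsx_eq, hsy_eq, hBs.simpleReflection_dotProduct_mulVec_simpleReflection (hdiag i)]
    ring
  refine ⟨(lt_inf'_iff _).mpr fun j _ => one_lt_inv_one_sub_two_mul hC (hopos j) (hC2 j), ?_⟩
  rw [hnxny, abs_mul, abs_mul, abs_of_pos (inv_pos.mpr hsx), abs_of_pos (inv_pos.mpr hsy)]
  calc T * |x ⬝ᵥ B *ᵥ y| < (sx ⬝ᵥ o)⁻¹ * |x ⬝ᵥ B *ᵥ y| := by gcongr; exact abs_pos.mpr hxBy.ne
    _ ≤ (sx ⬝ᵥ o)⁻¹ * (sy ⬝ᵥ o)⁻¹ * |x ⬝ᵥ B *ᵥ y| := by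
      gcongr
      exact le_mul_of_one_le_right (inv_pos.mpr hsx).le hsy1

/-- With `T = min_α 1/(1 - 2C|α|₁) > 1`, for `x ∈ U_α = {v ∈ Q̂ : B(α,v) > C}`
and `y ∈ V_α = {v ∈ Q̂ : B(α,v) ≥ 0}` one has `|B(s_α·x, s_α·y)| > T·|B(x,y)|`. -/
theorem stmt8 (n : ℕ) (B : Matrix (Fin n) (Fin n) ℝ) (hB : B.IsHermitian)
    (hdiag : ∀ i, B i i = 1)
    (hoff : ∀ i j, i ≠ j → B i j ≤ 0)
    (hneg : (Finset.univ.filter (fun i => hB.eigenvalues i < 0)).card = 1)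
    (hpos : (Finset.univ.filter (fun i => 0 < hB.eigenvalues i)).card = n - 1)
    (o : Fin n → ℝ) (μ : ℝ) (hμ : μ < 0) (ho : B.mulVec o = μ • o)
    (honorm : o ⬝ᵥ o = 1) (hopos : ∀ i, 0 < o i)
    (C : ℝ) (hC : 0 < C) (hC2 : ∀ j, C < 1 / (2 * o j))
    (i : Fin n) (x y : Fin n → ℝ)
    (hxQ : x ⬝ᵥ B.mulVec x = 0) (hx1 : x ⬝ᵥ o = 1)
    (hyQ : y ⬝ᵥ B.mulVec y = 0) (hy1 : y ⬝ᵥ o = 1)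
    (hxy : x ≠ y)
    (hx : C < B.mulVec x i) (hy : 0 ≤ B.mulVec y i) :
    let T := Finset.univ.inf' ⟨i, Finset.mem_univ i⟩ (fun j => (1 - 2 * C * o j)⁻¹)
    let sx := x - (2 * B.mulVec x i) • (Pi.single i (1:ℝ) : Fin n → ℝ)
    let sy := y - (2 * B.mulVec y i) • (Pi.single i (1:ℝ) : Fin n → ℝ)
    let nx := (sx ⬝ᵥ o)⁻¹ • sx
    let ny := (sy ⬝ᵥ o)⁻¹ • sy
    1 < T ∧ T * |x ⬝ᵥ B.mulVec y| < |nx ⬝ᵥ B.mulVec ny| :=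
  stmt8_general n B hB hdiag hpos o μ hμ ho honorm hopos C hC hC2 i x y hxQ hx1 hyQ hy1 hxy hx hy
end

section
/- Suppose w ∈ W has infinite order and x ∈ Q̂ is such that a subsequence (w^{nᵢ} · x) converges to y ∈ Q̂ with ||w^{nᵢ}(x)|₁| → ∞. Then for every fixed k ∈ ℤ, the shifted subsequence (w^{nᵢ+k} · x) also converges to y. -/
/-! The normalized action is continuous wherever the `o`-coordinate does not vanish, so the shifted
sequence `w^{nᵢ+k}·x = wᵏ·(w^{nᵢ}·x)` converges to `wᵏ·y`, and it remains to see `wᵏ·y = y`.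
As `w` preserves `B`, `B(w^{nᵢ}·x, wᵏ(w^{nᵢ}·x)) = B(x, wᵏx) / (w^{nᵢ}(x) ⬝ o)²`, which tends to `0`;
hence `B(y, wᵏy) = 0`. Since `B` is positive definite on `o^⊥`, two `B`-orthogonal points of `Q̂`
coincide, so `wᵏ·y = y`. -/

open Matrix Filter Topology

lemma Fintype.eq_of_not_of_not_of_card_filter_eq_card_sub_one {ι : Type*} [Fintype ι]
    {p : ι → Prop} [DecidablePred p] (hp : (Finset.univ.filter p).card = Fintype.card ι - 1)
    {i j : ι} (hi : ¬ p i) (hj : ¬ p j) : i = j := by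
  have hcard := Finset.card_filter_add_card_filter_not (s := Finset.univ) p
  rw [Finset.card_univ, hp] at hcard
  have hle : (Finset.univ.filter fun a => ¬ p a).card ≤ 1 := by omega
  exact Finset.card_le_one.mp hle i (by simpa using hi) j (by simpa using hj)

namespace Matrix

variable {ι : Type*} [Fintype ι]

lemma IsSymm.dotProduct_mulVec_comm_s12 {B : Matrix ι ι ℝ} (hB : B.IsSymm) (u v : ι → ℝ) :
    u ⬝ᵥ B *ᵥ v = v ⬝ᵥ B *ᵥ u := by
  rw [dotProduct_mulVec, ← hB.eq, vecMul_transpose, dotProduct_comm, hB.eq]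

section Eigen

variable [DecidableEq ι] {B : Matrix ι ι ℝ} (hB : B.IsHermitian)

lemma IsHermitian.dotProduct_eq_sum_eigenvectorBasis_s12 (u v : ι → ℝ) :
    u ⬝ᵥ v = ∑ i, (hB.eigenvectorBasis i ⬝ᵥ u) * (hB.eigenvectorBasis i ⬝ᵥ v) := by
  have := hB.eigenvectorBasis.sum_inner_mul_inner (WithLp.toLp 2 u) (WithLp.toLp 2 v)
  simp only [EuclideanSpace.inner_eq_star_dotProduct, star_trivial] at this
  rw [dotProduct_comm, ← this]
  simp [dotProduct_comm]

lemma IsHermitian.exists_eigenvectorBasis_dotProduct_ne_zero {u : ι → ℝ} (hu : u ≠ 0) :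
    ∃ i, hB.eigenvectorBasis i ⬝ᵥ u ≠ 0 := by
  by_contra! h
  exact hu (dotProduct_self_eq_zero.mp (by simp [hB.dotProduct_eq_sum_eigenvectorBasis_s12 u u, h]))

lemma IsHermitian.eigenvectorBasis_dotProduct_mulVec (v : ι → ℝ) (i : ι) :
    hB.eigenvectorBasis i ⬝ᵥ B *ᵥ v = hB.eigenvalues i * (hB.eigenvectorBasis i ⬝ᵥ v) := by
  rw [(isHermitian_iff_isSymm.mp hB).dotProduct_mulVec_comm_s12, dotProduct_comm,
    hB.mulVec_eigenvectorBasis, smul_dotProduct, smul_eq_mul]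

lemma IsHermitian.dotProduct_mulVec_eq_sum_s12 (u v : ι → ℝ) :
    u ⬝ᵥ B *ᵥ v = ∑ i, hB.eigenvalues i * (hB.eigenvectorBasis i ⬝ᵥ u) *
      (hB.eigenvectorBasis i ⬝ᵥ v) := by
  simp only [hB.dotProduct_eq_sum_eigenvectorBasis_s12 u, hB.eigenvectorBasis_dotProduct_mulVec,
    mul_left_comm, mul_assoc]

lemma IsHermitian.eigenvectorBasis_dotProduct_eq_zero {o : ι → ℝ} {μ : ℝ} (ho : B *ᵥ o = μ • o)
    {i : ι} (hi : hB.eigenvalues i ≠ μ) : hB.eigenvectorBasis i ⬝ᵥ o = 0 := by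
  have h := hB.eigenvectorBasis_dotProduct_mulVec o i
  rw [ho, dotProduct_smul, smul_eq_mul] at h
  exact (mul_eq_zero.mp (by linarith : (hB.eigenvalues i - μ) * _ = 0)).resolve_left
    (sub_ne_zero.mpr hi)

/-- With at most one non-positive eigenvalue, that eigenvalue is the one of the eigenvector `o`,
so the form is positive definite on `o^⊥`. -/
theorem IsHermitian.dotProduct_mulVec_self_pos
    (hpos : (Finset.univ.filter fun i => 0 < hB.eigenvalues i).card = Fintype.card ι - 1)
    {o : ι → ℝ} {μ : ℝ} (hμ : μ ≤ 0) (ho : B *ᵥ o = μ • o) (ho0 : o ≠ 0)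
    {u : ι → ℝ} (huo : u ⬝ᵥ o = 0) (hu : u ≠ 0) : 0 < u ⬝ᵥ B *ᵥ u := by
  set c := fun i => hB.eigenvectorBasis i ⬝ᵥ u
  have horth : ∀ {i}, 0 < hB.eigenvalues i → hB.eigenvectorBasis i ⬝ᵥ o = 0 :=
    fun hi => hB.eigenvectorBasis_dotProduct_eq_zero ho (by linarith)
  obtain ⟨j, hj⟩ := hB.exists_eigenvectorBasis_dotProduct_ne_zero ho0
  have hpos_of_ne : ∀ i ≠ j, 0 < hB.eigenvalues i := fun i hij => by
    by_contra hi
    exact hij (Fintype.eq_of_not_of_not_of_card_filter_eq_card_sub_one hpos hi (hj ∘ horth))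
  have hcj : c j = 0 := by
    rw [hB.dotProduct_eq_sum_eigenvectorBasis_s12, Finset.sum_eq_single j
      (fun i _ hij => by rw [horth (hpos_of_ne i hij), mul_zero]) (by simp)] at huo
    exact (mul_eq_zero.mp huo).resolve_right hj
  obtain ⟨i, hi⟩ := hB.exists_eigenvectorBasis_dotProduct_ne_zero hu
  have hij : i ≠ j := fun h => hi (h ▸ hcj)
  rw [hB.dotProduct_mulVec_eq_sum_s12]
  refine Finset.sum_pos' (fun l _ => ?_) ⟨i, Finset.mem_univ i, ?_⟩
  · rcases eq_or_ne l j with rfl | hlj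
    · simp [c, hcj]
    · simpa only [mul_assoc] using mul_nonneg (hpos_of_ne l hlj).le (mul_self_nonneg (c l))
  · simpa only [mul_assoc] using mul_pos (hpos_of_ne i hij) (mul_self_pos.mpr hi)

end Eigen

def isometryGroup (B : Matrix ι ι ℝ) : Subgroup ((ι → ℝ) ≃ₗ[ℝ] (ι → ℝ)) where
  carrier := {w | ∀ u v, w u ⬝ᵥ B *ᵥ w v = u ⬝ᵥ B *ᵥ v}
  mul_mem' ha hb u v := (ha _ _).trans (hb u v)
  one_mem' _ _ := rfl
  inv_mem' {w} hw u v := by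
    rw [← hw]
    simp

/-- `normalizeAlong o (w u)` is the normalized action `w·u`, the coordinate `u ⬝ᵥ o` playing the
role of `|u|₁`; its value is `0` when `u ⬝ᵥ o = 0`. -/
noncomputable def normalizeAlong (o u : ι → ℝ) : ι → ℝ := (u ⬝ᵥ o)⁻¹ • u

variable {o : ι → ℝ}

lemma normalizeAlong_smul {c : ℝ} (hc : c ≠ 0) (u : ι → ℝ) :
    normalizeAlong o (c • u) = normalizeAlong o u := by
  rw [normalizeAlong, normalizeAlong, smul_dotProduct, smul_eq_mul, smul_smul]
  congr 1
  field_simp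

lemma normalizeAlong_map_normalizeAlong {F : Type*} [FunLike F (ι → ℝ) (ι → ℝ)]
    [LinearMapClass F ℝ (ι → ℝ) (ι → ℝ)] (L : F) {u : ι → ℝ} (hu : u ⬝ᵥ o ≠ 0) :
    normalizeAlong o (L (normalizeAlong o u)) = normalizeAlong o (L u) := by
  rw [show normalizeAlong o u = (u ⬝ᵥ o)⁻¹ • u from rfl, map_smul,
    normalizeAlong_smul (inv_ne_zero hu)]

lemma normalizeAlong_dotProduct {u : ι → ℝ} (hu : u ⬝ᵥ o ≠ 0) : normalizeAlong o u ⬝ᵥ o = 1 := by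
  rw [normalizeAlong, smul_dotProduct, smul_eq_mul, inv_mul_cancel₀ hu]

lemma continuousAt_normalizeAlong {u : ι → ℝ} (hu : u ⬝ᵥ o ≠ 0) :
    ContinuousAt (normalizeAlong o) u :=
  (((continuous_id.dotProduct continuous_const).continuousAt).inv₀ hu).smul continuousAt_id

section Isotropic

variable {B : Matrix ι ι ℝ}

lemma eq_of_isotropic_of_dotProduct_mulVec_eq_zero (hB : B.IsSymm)
    (hnull : ∀ u, u ⬝ᵥ B *ᵥ u = 0 → u ⬝ᵥ o = 0 → u = 0) {u v : ι → ℝ}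
    (hu : u ⬝ᵥ B *ᵥ u = 0) (hv : v ⬝ᵥ B *ᵥ v = 0) (huvo : u ⬝ᵥ o = v ⬝ᵥ o)
    (huv : u ⬝ᵥ B *ᵥ v = 0) : u = v := by
  refine sub_eq_zero.mp (hnull _ ?_ (by rw [sub_dotProduct, huvo, sub_self]))
  simp only [sub_dotProduct, mulVec_sub, dotProduct_sub, hu, hv, huv, hB.dotProduct_mulVec_comm_s12 v u,
    sub_self]

lemma normalizeAlong_eq_of_dotProduct_mulVec_eq_zero (hB : B.IsSymm)
    (hnull : ∀ u, u ⬝ᵥ B *ᵥ u = 0 → u ⬝ᵥ o = 0 → u = 0) {y z : ι → ℝ}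
    (hy : y ⬝ᵥ B *ᵥ y = 0) (hy1 : y ⬝ᵥ o = 1) (hz : z ⬝ᵥ B *ᵥ z = 0) (hzo : z ⬝ᵥ o ≠ 0)
    (hyz : y ⬝ᵥ B *ᵥ z = 0) : normalizeAlong o z = y := by
  refine (eq_of_isotropic_of_dotProduct_mulVec_eq_zero hB hnull hy ?_ ?_ ?_).symm
  · simp [normalizeAlong, mulVec_smul, hz]
  · rw [hy1, normalizeAlong_dotProduct hzo]
  · simp [normalizeAlong, mulVec_smul, hyz]

/-- The pairing of `a⁻¹ • wᵐ x` with its `wᵏ`-translate is `a⁻² B(x, wᵏ x)`, which tends to `0`. -/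
lemma dotProduct_mulVec_zpow_eq_zero_of_tendsto {α : Type*} {l : Filter α} [l.NeBot]
    {w : (ι → ℝ) ≃ₗ[ℝ] (ι → ℝ)} (hw : w ∈ isometryGroup B) (k : ℤ) {m : α → ℤ} {a : α → ℝ}
    {x y : ι → ℝ} (ha : Tendsto (fun i => |a i|) l atTop)
    (hxy : Tendsto (fun i => (a i)⁻¹ • (w ^ m i) x) l (𝓝 y)) :
    y ⬝ᵥ B *ᵥ (w ^ k) y = 0 := by
  have hcont : Continuous fun v : ι → ℝ => v ⬝ᵥ B *ᵥ (w ^ k) v :=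
    continuous_id.dotProduct (continuous_const.matrix_mulVec
      (LinearMap.continuous_of_finiteDimensional (w ^ k).toLinearMap))
  have hpair : ∀ i, ((a i)⁻¹ • (w ^ m i) x) ⬝ᵥ B *ᵥ (w ^ k) ((a i)⁻¹ • (w ^ m i) x)
      = (a i)⁻¹ * (a i)⁻¹ * (x ⬝ᵥ B *ᵥ (w ^ k) x) := fun i => by
    rw [map_smul, mulVec_smul, smul_dotProduct, dotProduct_smul, ← LinearEquiv.mul_apply,
      zpow_mul_comm, LinearEquiv.mul_apply, zpow_mem hw (m i) x, smul_eq_mul, smul_eq_mul,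
      mul_assoc]
  have hinv : Tendsto (fun i => (a i)⁻¹) l (𝓝 0) :=
    (tendsto_zero_iff_abs_tendsto_zero _).mpr <| by
      simpa [Function.comp_def, abs_inv] using tendsto_inv_atTop_zero.comp ha
  have hlim := (hinv.mul hinv).mul_const (x ⬝ᵥ B *ᵥ (w ^ k) x)
  rw [zero_mul, zero_mul] at hlim
  exact tendsto_nhds_unique ((hcont.tendsto y).comp hxy) (hlim.congr fun i => (hpair i).symm)

end Isotropic

end Matrix

theorem stmt12_general (n : ℕ) (B : Matrix (Fin n) (Fin n) ℝ) (hB : B.IsHermitian)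
    (hpos : (Finset.univ.filter (fun i => 0 < hB.eigenvalues i)).card = n - 1)
    (o : Fin n → ℝ) (μ : ℝ) (hμ : μ < 0) (ho : B.mulVec o = μ • o)
    (honorm : o ⬝ᵥ o = 1)
    (w : (Fin n → ℝ) ≃ₗ[ℝ] (Fin n → ℝ))
    (hw : ∀ u v : Fin n → ℝ, (w u) ⬝ᵥ B.mulVec (w v) = u ⬝ᵥ B.mulVec v)
    (x y : Fin n → ℝ)
    (hyQ : y ⬝ᵥ B.mulVec y = 0) (hy1 : y ⬝ᵥ o = 1)
    (ni : ℕ → ℕ)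
    (hconv : Filter.Tendsto
      (fun i : ℕ => (((w ^ (ni i : ℤ)) x) ⬝ᵥ o)⁻¹ • ((w ^ (ni i : ℤ)) x))
      Filter.atTop (nhds y))
    (hdiv : Filter.Tendsto (fun i : ℕ => |((w ^ (ni i : ℤ)) x) ⬝ᵥ o|)
      Filter.atTop Filter.atTop)
    (k : ℤ) :
    Filter.Tendsto
      (fun i : ℕ => (((w ^ ((ni i : ℤ) + k)) x) ⬝ᵥ o)⁻¹ • ((w ^ ((ni i : ℤ) + k)) x))
      Filter.atTop (nhds y) := by
  have hnull : ∀ u, u ⬝ᵥ B *ᵥ u = 0 → u ⬝ᵥ o = 0 → u = 0 := fun u hu huo => by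
    by_contra hu0
    have ho0 : o ≠ 0 := fun h => by simp [h] at honorm
    exact (hB.dotProduct_mulVec_self_pos (by rwa [Fintype.card_fin]) hμ.le ho ho0 huo hu0).ne' hu
  have hw' : w ∈ isometryGroup B := hw
  have hwk : w ^ k ∈ isometryGroup B := zpow_mem hw' k
  have hzo : (w ^ k) y ⬝ᵥ o ≠ 0 := fun h => by
    have := hnull _ ((hwk y y).trans hyQ) h
    simp [(w ^ k).map_eq_zero_iff.mp this] at hy1
  have hfix : normalizeAlong o ((w ^ k) y) = y :=
    normalizeAlong_eq_of_dotProduct_mulVec_eq_zero (isHermitian_iff_isSymm.mp hB) hnull hyQ hy1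
      ((hwk y y).trans hyQ) hzo (dotProduct_mulVec_zpow_eq_zero_of_tendsto hw' k hdiv hconv)
  have hlim : Tendsto (fun i => normalizeAlong o ((w ^ k) (normalizeAlong o ((w ^ (ni i : ℤ)) x))))
      atTop (𝓝 y) := hfix ▸ (continuousAt_normalizeAlong hzo).tendsto.comp
    (((LinearMap.continuous_of_finiteDimensional (w ^ k).toLinearMap).tendsto y).comp hconv)
  refine hlim.congr' ?_
  filter_upwards [hdiv.eventually_ne_atTop 0] with i hi
  rw [normalizeAlong_map_normalizeAlong _ (abs_ne_zero.mp hi), ← LinearEquiv.mul_apply,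
    ← _root_.zpow_add, add_comm]
  rfl

/-- If `w` (of infinite order, preserving `B`) and `x ∈ Q̂` are such that a
subsequence `w^{nᵢ} · x` of normalized iterates converges to `y ∈ Q̂` with
`||w^{nᵢ}(x)|₁| → ∞`, then every shifted subsequence `w^{nᵢ+k} · x` also converges to `y`. -/
theorem stmt12 (n : ℕ) (B : Matrix (Fin n) (Fin n) ℝ) (hB : B.IsHermitian)
    (hneg : (Finset.univ.filter (fun i => hB.eigenvalues i < 0)).card = 1)
    (hpos : (Finset.univ.filter (fun i => 0 < hB.eigenvalues i)).card = n - 1)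
    (o : Fin n → ℝ) (μ : ℝ) (hμ : μ < 0) (ho : B.mulVec o = μ • o)
    (honorm : o ⬝ᵥ o = 1)
    (w : (Fin n → ℝ) ≃ₗ[ℝ] (Fin n → ℝ))
    (hw : ∀ u v : Fin n → ℝ, (w u) ⬝ᵥ B.mulVec (w v) = u ⬝ᵥ B.mulVec v)
    (hord : ¬ IsOfFinOrder w)
    (x y : Fin n → ℝ)
    (hxQ : x ⬝ᵥ B.mulVec x = 0) (hx1 : x ⬝ᵥ o = 1)
    (hyQ : y ⬝ᵥ B.mulVec y = 0) (hy1 : y ⬝ᵥ o = 1)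
    (ni : ℕ → ℕ) (hni : StrictMono ni)
    (hconv : Filter.Tendsto
      (fun i : ℕ => (((w ^ (ni i : ℤ)) x) ⬝ᵥ o)⁻¹ • ((w ^ (ni i : ℤ)) x))
      Filter.atTop (nhds y))
    (hdiv : Filter.Tendsto (fun i : ℕ => |((w ^ (ni i : ℤ)) x) ⬝ᵥ o|)
      Filter.atTop Filter.atTop)
    (k : ℤ) :
    Filter.Tendsto
      (fun i : ℕ => (((w ^ ((ni i : ℤ) + k)) x) ⬝ᵥ o)⁻¹ • ((w ^ ((ni i : ℤ) + k)) x))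
      Filter.atTop (nhds y) :=
  stmt12_general n B hB hpos o μ hμ ho honorm w hw x y hyQ hy1 ni hconv hdiv k
end
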